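/- Conversely, if G' = (V',E') has a Hamiltonian cycle, then in the augmented graph G (with added vertices v†, v₁, v₂ and edges (v†,w), (v₁,v₂), and (v,v₁) for v ∈ N_{G'}(w)), one can delete exactly |E'| − |V'| + |N_{G'}(w)| edges from G to obtain a spanning path of G whose endpoints are v† and v₂. -/

import Mathlib

/-- The augmented graph `G` of the closeness-hardness reduction: to `G'` we add
three vertices `v† = inr 0`, `v₁ = inr 1`, `v₂ = inr 2` and the edges `(v†,w)`,
`(v₁,v₂)`, and `(v,v₁)` for every neighbour `v` of `w` in `G'`. -/
def augGraph {V' : Type*} (G' : SimpleGraph V') (w : V') :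
    SimpleGraph (V' ⊕ Fin 3) :=
  SimpleGraph.fromRel (fun x y =>
    (∃ a b : V', x = Sum.inl a ∧ y = Sum.inl b ∧ G'.Adj a b) ∨
    (x = Sum.inr 0 ∧ y = Sum.inl w) ∨
    (x = Sum.inr 1 ∧ y = Sum.inr 2) ∨
    (∃ a : V', G'.Adj a w ∧ x = Sum.inl a ∧ y = Sum.inr 1))

/-!
Dropping one edge `(w, x)` from a Hamiltonian cycle of `G'` leaves a Hamiltonian path of `G'`
from `w` to its neighbour `x`. Then
`v† – w ⋯ x – v₁ – v₂` is a Hamiltonian path of `G` with `|V'| + 2` edges, while `G` has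
`|E'| + |N_{G'}(w)| + 2` edges.
-/

namespace SimpleGraph.Walk

variable {V : Type*} [DecidableEq V] {G : SimpleGraph V}

lemma IsHamiltonian.reverse {u v : V} {p : G.Walk u v} (hp : p.IsHamiltonian) :
    p.reverse.IsHamiltonian := fun a ↦ by
  rw [support_reverse, List.count_reverse, hp a]

lemma IsHamiltonianCycle.exists_isHamiltonian_to_adj {u : V} {c : G.Walk u u}
    (hc : c.IsHamiltonianCycle) (w : V) :
    ∃ x, G.Adj x w ∧ ∃ q : G.Walk w x, q.IsHamiltonian := by
  have hc' := hc.rotate (hc.mem_support w)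
  exact ⟨_, (adj_snd hc'.not_nil).symm, _, hc'.isHamiltonian_tail.reverse⟩

end SimpleGraph.Walk

open SimpleGraph Walk

section augGraph

variable {V : Type*} (G : SimpleGraph V) (w : V)

@[simp] lemma augGraph_adj_inl_inl {a b : V} :
    (augGraph G w).Adj (.inl a) (.inl b) ↔ G.Adj a b := by
  simp only [augGraph, fromRel_adj]
  simpa [G.adj_comm b a] using Adj.ne

@[simp] lemma augGraph_adj_inl_inr {a : V} {i : Fin 3} :
    (augGraph G w).Adj (.inl a) (.inr i) ↔ (i = 0 ∧ a = w) ∨ (i = 1 ∧ G.Adj a w) := by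
  simp only [augGraph, fromRel_adj]
  aesop

@[simp] lemma augGraph_adj_inr_inl {i : Fin 3} {a : V} :
    (augGraph G w).Adj (.inr i) (.inl a) ↔ (i = 0 ∧ a = w) ∨ (i = 1 ∧ G.Adj a w) := by
  rw [adj_comm, augGraph_adj_inl_inr]

@[simp] lemma augGraph_adj_inr_inr {i j : Fin 3} :
    (augGraph G w).Adj (.inr i) (.inr j) ↔ s(i, j) = s(1, 2) := by
  simp only [augGraph, fromRel_adj]
  aesop

lemma augGraph_edgeSet :
    (augGraph G w).edgeSet = Sym2.map Sum.inl '' G.edgeSet ∪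
      ((fun a ↦ s(.inl a, .inr 1)) '' G.neighborSet w ∪ {s(.inr 0, .inl w), s(.inr 1, .inr 2)}) := by
  ext ⟨x, y⟩
  rcases x with a | i <;> rcases y with b | j
  all_goals simp [Sym2.exists, G.adj_comm w]
  all_goals grind [Adj.symm]

lemma augGraph_edgeSet_ncard [Finite V] :
    (augGraph G w).edgeSet.ncard = G.edgeSet.ncard + (G.neighborSet w).ncard + 2 := by
  have hspoke : Function.Injective fun a : V ↦ (s(.inl a, .inr 1) : Sym2 (V ⊕ Fin 3)) := by
    intro a b h
    simpa using h
  rw [augGraph_edgeSet, Set.ncard_union_eq, Set.ncard_union_eq,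
    Set.ncard_image_of_injective _ (Sym2.map.injective Sum.inl_injective),
    Set.ncard_image_of_injective _ hspoke, Set.ncard_pair (by simp), add_assoc]
  · simp [Set.disjoint_left]
  · simp only [Set.disjoint_left, Set.forall_mem_image]
    rintro ⟨a, b⟩ -
    simp

variable {G w} in
lemma augGraph_exists_isHamiltonian [DecidableEq V] {x : V} (hx : G.Adj x w)
    {q : G.Walk w x} (hq : q.IsHamiltonian) :
    ∃ p : (augGraph G w).Walk (.inr 0) (.inr 2), p.IsHamiltonian ∧ p.length = q.length + 3 := by
  let f : G →g augGraph G w := ⟨Sum.inl, (augGraph_adj_inl_inl G w).2⟩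
  have h0 : (augGraph G w).Adj (.inr 0) (.inl w) := by simp
  have h1 : (augGraph G w).Adj (.inl x) (.inr 1) := by simpa using hx
  have h2 : (augGraph G w).Adj (.inr 1) (.inr 2) := by simp
  let p : (augGraph G w).Walk (.inr 0) (.inr 2) :=
    .cons h0 ((q.map f).append (.cons h1 (.cons h2 .nil)))
  refine ⟨p, ?_, by simp [p]⟩
  have hsupp : p.support = .inr 0 :: (q.support.map .inl ++ [.inr 1, .inr 2]) := by
    simp only [p, support_cons, support_append, Walk.support_map, support_nil, List.tail_cons]
    rfl
  intro v
  rcases v with a | i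
  · simp [hsupp, List.count_map_of_injective _ _ Sum.inl_injective, hq a]
  · fin_cases i <;> simp [hsupp, List.count_eq_zero]

end augGraph

/-- If `G'` has a Hamiltonian cycle, then the augmented graph `G`
contains a spanning (Hamiltonian) path from `v†` to `v₂` obtained by deleting
exactly `|E'| − |V'| + |N_{G'}(w)|` edges of `G`; equivalently, the number of
edges of the path plus `|E'| + |N_{G'}(w)|` equals `|E(G)| + |V'|`. -/
theorem ham_cycle_to_ham_path_aug
    {V' : Type*} [Fintype V'] [DecidableEq V'] (G' : SimpleGraph V') (w : V')
    (hham : ∃ (v : V') (c : G'.Walk v v), c.IsHamiltonianCycle) :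
    ∃ p : (augGraph G' w).Walk (Sum.inr 0) (Sum.inr 2),
      p.IsHamiltonian ∧
      p.edges.length + G'.edgeSet.ncard + (G'.neighborSet w).ncard
        = (augGraph G' w).edgeSet.ncard + Fintype.card V' := by
  obtain ⟨_, c, hc⟩ := hham
  obtain ⟨x, hx, q, hq⟩ := hc.exists_isHamiltonian_to_adj w
  obtain ⟨p, hp, hlen⟩ := augGraph_exists_isHamiltonian hx hq
  refine ⟨p, hp, ?_⟩
  have hcard : 0 < Fintype.card V' := Fintype.card_pos_iff.2 ⟨w⟩
  rw [length_edges, hlen, hq.length_eq, augGraph_edgeSet_ncard]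
  omega
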